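/- arXiv:2408.07646 — 4 statements merged into one kernel-verified Lean document; each statement's English description precedes it below -/
import Mathlib

section
/- Let k ≥ 2 and let G be a graph with a simplicial vertex v (i.e., the neighbors of v form a clique). Then the deletion of v in Δ = Δₖᵗ(G) equals the star of N(v) in Δₖ₋₁ᵗ(G∖{v}), i.e., del_Δ(v) is generated by exactly those facets of Δₖ₋₁ᵗ(G∖{v}) that contain the neighborhood N(v). -/
open Finset

attribute [local instance] Classical.propDecidable

variable {V : Type*}

def gridGraph (m n : ℕ) : SimpleGraph (Fin m × Fin n) where
  Adj u v := (u.1 = v.1 ∧ (u.2.1 + 1 = v.2.1 ∨ v.2.1 + 1 = u.2.1)) ∨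
             (u.2 = v.2 ∧ (u.1.1 + 1 = v.1.1 ∨ v.1.1 + 1 = u.1.1))
  symm := by
    constructor
    intro u v h
    rcases h with ⟨h1, h2⟩ | ⟨h1, h2⟩
    · exact Or.inl ⟨h1.symm, h2.symm⟩
    · exact Or.inr ⟨h1.symm, h2.symm⟩
  loopless := by
    constructor
    intro u h
    rcases h with ⟨-, h | h⟩ | ⟨-, h | h⟩ <;> omega

def IsIndep (G : SimpleGraph V) (S : Finset V) : Prop := ∀ u ∈ S, ∀ v ∈ S, ¬ G.Adj u v

def totalCutComplex [Fintype V] (G : SimpleGraph V) (k : ℕ) : Set (Finset V) :=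
  {σ | ∃ S : Finset V, S ⊆ σᶜ ∧ S.card = k ∧ IsIndep G S}

def cutComplex [Fintype V] (G : SimpleGraph V) (k : ℕ) : Set (Finset V) :=
  {σ | ∃ S : Finset V, S ⊆ σᶜ ∧ S.card = k ∧ ¬ (G.induce (S : Set V)).Connected}

def linkC (K : Set (Finset V)) (W : Finset V) : Set (Finset V) :=
  {τ | τ ∩ W = ∅ ∧ τ ∪ W ∈ K}

def delC (K : Set (Finset V)) (v : V) : Set (Finset V) := {σ ∈ K | v ∉ σ}

def starC (K : Set (Finset V)) (F : Finset V) : Set (Finset V) := {σ ∈ K | σ ∪ F ∈ K}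

def IsFacet (K : Set (Finset V)) (σ : Finset V) : Prop :=
  σ ∈ K ∧ ∀ τ ∈ K, σ ⊆ τ → σ = τ

def geomReal [Fintype V] (K : Set (Finset V)) : Set (V → ℝ) :=
  {f | (∀ v, 0 ≤ f v) ∧ (∑ v, f v) = 1 ∧ ∃ σ ∈ K, ∀ v, f v ≠ 0 → v ∈ σ}

def nSphere (d : ℕ) : Set (EuclideanSpace ℝ (Fin (d + 1))) := Metric.sphere 0 1

noncomputable def spherePt (d : ℕ) : ↥(nSphere d) :=
  ⟨EuclideanSpace.single 0 1, by simp [nSphere, EuclideanSpace.norm_single]⟩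

def wedgeRel (N d : ℕ) (a b : (Σ _ : Fin N, ↥(nSphere d)) ⊕ Unit) : Prop :=
  a = b ∨ ((a = Sum.inr () ∨ ∃ i, a = Sum.inl ⟨i, spherePt d⟩) ∧
           (b = Sum.inr () ∨ ∃ i, b = Sum.inl ⟨i, spherePt d⟩))

def wedgeOfSpheres (N d : ℕ) : Type := Quot (wedgeRel N d)

noncomputable instance (N d : ℕ) : TopologicalSpace (wedgeOfSpheres N d) := by
  unfold wedgeOfSpheres; infer_instance


lemma map_subtype_eq {p : V → Prop} [DecidablePred p] (s : Finset V) (hs : ∀ x ∈ s, p x) :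
    (s.subtype p).map ⟨Subtype.val, Subtype.val_injective⟩ = s := by
  ext x
  simp only [Finset.mem_map, Finset.mem_subtype, Function.Embedding.coeFn_mk]
  constructor
  · rintro ⟨⟨a, ha⟩, h1, rfl⟩; exact h1
  · intro hx; exact ⟨⟨x, hs x hx⟩, hx, rfl⟩

/-- If `v` is a simplicial vertex of `G` (its neighbourhood is a clique), then the
deletion of `v` in the total `k`-cut complex of `G` is the star of `N(v)` in the
total `(k-1)`-cut complex of `G ∖ {v}`. -/
theorem del_simplicial_vertex_totalCutComplex
    [Fintype V] (G : SimpleGraph V) (k : ℕ) (hk : 2 ≤ k) (v : V)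
    (hsimp : ∀ u ∈ G.neighborSet v, ∀ w ∈ G.neighborSet v, u ≠ w → G.Adj u w) :
    delC (totalCutComplex G k) v =
      (fun σ : Finset ↥{u : V | u ≠ v} =>
        σ.map ⟨Subtype.val, Subtype.val_injective⟩) ''
        starC (totalCutComplex (G.induce {u : V | u ≠ v}) (k - 1))
          ((G.neighborFinset v).subtype (fun u => u ∈ {u : V | u ≠ v})) := by
  ext σ
  constructor
  · rintro ⟨⟨S, hSc, hScard, hSind⟩, hvσ⟩
    -- a common independent set of size k-1 avoiding v and N(v)
    have hT : ∃ T : Finset V, T ⊆ S ∧ T.card = k - 1 ∧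
        ∀ x ∈ T, x ≠ v ∧ ¬ G.Adj v x := by
      by_cases hvS : v ∈ S
      · refine ⟨S.erase v, Finset.erase_subset _ _,
          by rw [Finset.card_erase_of_mem hvS, hScard], ?_⟩
        intro x hx
        have hxS : x ∈ S := Finset.mem_of_mem_erase hx
        exact ⟨Finset.ne_of_mem_erase hx, hSind v hvS x hxS⟩
      · have hle : (S ∩ G.neighborFinset v).card ≤ 1 := by
          rw [Finset.card_le_one]
          intro a ha b hb
          by_contra hab
          have haS := Finset.mem_inter.mp ha
          have hbS := Finset.mem_inter.mp hb
          have ha2 : G.Adj v a := by simpa using haS.2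
          have hb2 : G.Adj v b := by simpa using hbS.2
          exact hSind a haS.1 b hbS.1 (hsimp a ha2 b hb2 hab)
        have hkey := Finset.card_inter_add_card_sdiff S (G.neighborFinset v)
        have hge : k - 1 ≤ (S \ G.neighborFinset v).card := by omega
        obtain ⟨T, hTsub, hTcard⟩ := Finset.exists_subset_card_eq hge
        refine ⟨T, hTsub.trans (Finset.sdiff_subset), hTcard, ?_⟩
        intro x hx
        have hx' := hTsub hx
        have hxS := (Finset.mem_sdiff.mp hx').1
        have hxN := (Finset.mem_sdiff.mp hx').2
        constructor
        · rintro rfl; exact hvS hxS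
        · intro hAdj; exact hxN (by simpa using hAdj)
    obtain ⟨T, hTS, hTcard, hTprop⟩ := hT
    set p : V → Prop := fun u => u ∈ {u : V | u ≠ v} with hp
    have hTp : ∀ x ∈ T, p x := fun x hx => (hTprop x hx).1
    have hTmapcard : (T.subtype p).card = k - 1 := by
      rw [← Finset.card_map ⟨Subtype.val, Subtype.val_injective⟩, map_subtype_eq T hTp, hTcard]
    have hTind : IsIndep (G.induce {u : V | u ≠ v}) (T.subtype p) := by
      intro a ha b hb hadj
      simp only [SimpleGraph.induce, SimpleGraph.comap_adj, Function.Embedding.coe_subtype] at hadj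
      exact hSind a (hTS (Finset.mem_subtype.mp ha)) b (hTS (Finset.mem_subtype.mp hb)) hadj
    have hTσ : ∀ a : {u : V | u ≠ v}, a ∈ T.subtype p → (a : V) ∉ σ := by
      intro a ha hmem
      have := hSc (hTS (Finset.mem_subtype.mp ha))
      simp only [Finset.mem_compl] at this
      exact this hmem
    refine ⟨σ.subtype p, ⟨⟨T.subtype p, ?_, hTmapcard, hTind⟩,
      ⟨T.subtype p, ?_, hTmapcard, hTind⟩⟩, ?_⟩
    · intro a ha
      simp only [Finset.mem_compl, Finset.mem_subtype]
      exact hTσ a ha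
    · intro a ha
      simp only [Finset.mem_compl, Finset.mem_union, Finset.mem_subtype,
        SimpleGraph.mem_neighborFinset, not_or]
      exact ⟨hTσ a ha, (hTprop a (Finset.mem_subtype.mp ha)).2⟩
    · exact map_subtype_eq σ (fun x hx => fun hxv => hvσ (hxv ▸ hx))
  · rintro ⟨σ', ⟨-, ⟨S2, h2c, h2card, h2ind⟩⟩, rfl⟩
    have h2c' : ∀ a : {u : V | u ≠ v}, a ∈ S2 → a ∉ σ' ∧ ¬ G.Adj v a := by
      intro a ha
      have := h2c ha
      simp only [Finset.mem_compl, Finset.mem_union, not_or, Finset.mem_subtype,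
        SimpleGraph.mem_neighborFinset] at this
      exact this
    have hvmap : v ∉ σ'.map ⟨Subtype.val, Subtype.val_injective⟩ := by
      simp only [Finset.mem_map, Function.Embedding.coeFn_mk]
      rintro ⟨a, -, ha⟩
      exact a.prop ha
    have hvS2 : v ∉ S2.map ⟨Subtype.val, Subtype.val_injective⟩ := by
      simp only [Finset.mem_map, Function.Embedding.coeFn_mk]
      rintro ⟨a, -, ha⟩
      exact a.prop ha
    refine ⟨⟨insert v (S2.map ⟨Subtype.val, Subtype.val_injective⟩), ?_, ?_, ?_⟩, hvmap⟩
    · intro x hx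
      simp only [Finset.mem_compl]
      rcases Finset.mem_insert.mp hx with rfl | hx
      · exact hvmap
      · simp only [Finset.mem_map, Function.Embedding.coeFn_mk] at hx ⊢
        obtain ⟨a, ha, rfl⟩ := hx
        rintro ⟨b, hb, hba⟩
        have hba' : b = a := Subtype.val_injective hba
        subst hba'
        exact (h2c' b ha).1 hb
    · rw [Finset.card_insert_of_notMem hvS2, Finset.card_map, h2card]
      omega
    · intro x hx y hy hadj
      rcases Finset.mem_insert.mp hx with rfl | hx <;>
        rcases Finset.mem_insert.mp hy with rfl | hy
      · exact G.loopless.irrefl _ hadj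
      · simp only [Finset.mem_map, Function.Embedding.coeFn_mk] at hy
        obtain ⟨b, hb, rfl⟩ := hy
        exact (h2c' b hb).2 hadj
      · simp only [Finset.mem_map, Function.Embedding.coeFn_mk] at hx
        obtain ⟨a, ha, rfl⟩ := hx
        exact (h2c' a ha).2 hadj.symm
      · simp only [Finset.mem_map, Function.Embedding.coeFn_mk] at hx hy
        obtain ⟨a, ha, rfl⟩ := hx
        obtain ⟨b, hb, rfl⟩ := hy
        have : (G.induce {u : V | u ≠ v}).Adj a b := by
          simp only [SimpleGraph.induce, SimpleGraph.comap_adj, Function.Embedding.coe_subtype]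
          exact hadj
        exact h2ind a ha b hb this
end

section
/- For the 2×n grid graph G_{2×n} with n ≥ 2 and 2 ≤ k ≤ n, every facet σ of the deletion of b_n in Δₖᵗ(G_{2×n}) contains a_{n-1} or b_{n-1}; equivalently, del(b_n) = st_{del(b_n)}(a_{n-1}) ∪ st_{del(b_n)}(b_{n-1}). -/
open Finset

attribute [local instance] Classical.propDecidable

variable {V : Type*}

/-!
An independent set cannot contain both of two adjacent vertices, so a face `σ` of the total
cut complex, witnessed by an independent set `S` in its complement, stays a face after adding
whichever of `a_{n-1}`, `b_{n-1}` lies outside `S`. Neither vertex is `b_n`, so this also holds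
in the deletion of `b_n`: every face lies in one of the two stars, and a facet, being maximal,
contains the corresponding vertex.
-/

theorem union_singleton_mem_totalCutComplex_or [Fintype V] {G : SimpleGraph V} {k : ℕ}
    {u w : V} (huw : G.Adj u w) {σ : Finset V} (hσ : σ ∈ totalCutComplex G k) :
    σ ∪ {u} ∈ totalCutComplex G k ∨ σ ∪ {w} ∈ totalCutComplex G k := by
  obtain ⟨S, hSσ, hcard, hind⟩ := hσ
  have extend : ∀ x ∉ S, σ ∪ {x} ∈ totalCutComplex G k := fun x hx =>
    ⟨S, fun y hy => by
      have hyσ : y ∉ σ := mem_compl.mp (hSσ hy)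
      have hyx : y ≠ x := fun h => hx (h ▸ hy)
      simp [hyσ, hyx], hcard, hind⟩
  by_cases hu : u ∈ S
  · exact Or.inr (extend w fun hw => hind u hu w hw huw)
  · exact Or.inl (extend u hu)

theorem mem_starC_delC_singleton {K : Set (Finset V)} {v x : V} {σ : Finset V}
    (hσ : σ ∈ delC K v) (hvx : v ≠ x) (h : σ ∪ {x} ∈ K) : σ ∈ starC (delC K v) {x} :=
  ⟨hσ, h, by simp [hσ.2, hvx]⟩

theorem mem_starC_delC_totalCutComplex_or [Fintype V] {G : SimpleGraph V} {k : ℕ}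
    {u v w : V} (huw : G.Adj u w) (hvu : v ≠ u) (hvw : v ≠ w) {σ : Finset V}
    (hσ : σ ∈ delC (totalCutComplex G k) v) :
    σ ∈ starC (delC (totalCutComplex G k) v) {u} ∨
      σ ∈ starC (delC (totalCutComplex G k) v) {w} :=
  (union_singleton_mem_totalCutComplex_or huw hσ.1).imp
    (mem_starC_delC_singleton hσ hvu) (mem_starC_delC_singleton hσ hvw)

theorem IsFacet.mem_of_mem_starC {K : Set (Finset V)} {σ : Finset V} {u : V}
    (hσ : IsFacet K σ) (h : σ ∈ starC K {u}) : u ∈ σ := by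
  rw [hσ.2 _ h.2 subset_union_left]
  exact mem_union_right _ (mem_singleton_self u)

theorem eq_starC_union_starC {K : Set (Finset V)} {u w : V}
    (h : ∀ σ ∈ K, σ ∈ starC K {u} ∨ σ ∈ starC K {w}) :
    K = starC K {u} ∪ starC K {w} :=
  Set.Subset.antisymm h (Set.union_subset (fun _ h => h.1) (fun _ h => h.1))

/-- Rows: `0 = a`, `1 = b`; columns are `0`-indexed, so `b_n` is `(1, n - 1)`. -/
theorem del_bn_eq_union_stars (n k : ℕ) (hn : 2 ≤ n) :
    (∀ σ, IsFacet (delC (totalCutComplex (gridGraph 2 n) k)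
        ((1 : Fin 2), (⟨n - 1, by omega⟩ : Fin n))) σ →
      ((0 : Fin 2), (⟨n - 2, by omega⟩ : Fin n)) ∈ σ ∨
      ((1 : Fin 2), (⟨n - 2, by omega⟩ : Fin n)) ∈ σ) ∧
    delC (totalCutComplex (gridGraph 2 n) k) ((1 : Fin 2), (⟨n - 1, by omega⟩ : Fin n)) =
      starC (delC (totalCutComplex (gridGraph 2 n) k) ((1 : Fin 2), (⟨n - 1, by omega⟩ : Fin n)))
        {((0 : Fin 2), (⟨n - 2, by omega⟩ : Fin n))} ∪
      starC (delC (totalCutComplex (gridGraph 2 n) k) ((1 : Fin 2), (⟨n - 1, by omega⟩ : Fin n)))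
        {((1 : Fin 2), (⟨n - 2, by omega⟩ : Fin n))} := by
  have hcover := fun σ (hσ : σ ∈ delC (totalCutComplex (gridGraph 2 n) k)
      ((1 : Fin 2), (⟨n - 1, by omega⟩ : Fin n))) =>
    mem_starC_delC_totalCutComplex_or (u := ((0 : Fin 2), (⟨n - 2, by omega⟩ : Fin n)))
      (w := ((1 : Fin 2), (⟨n - 2, by omega⟩ : Fin n))) (Or.inr ⟨rfl, Or.inl rfl⟩)
      (by simp [Prod.ext_iff]) (by simp [Prod.ext_iff, Fin.ext_iff]; omega) hσ
  exact ⟨fun σ hσ => (hcover σ hσ.1).imp hσ.mem_of_mem_starC hσ.mem_of_mem_starC,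
    eq_starC_union_starC hcover⟩
end

section
/- For n = k ≥ 2, the total n-cut complex of the 2×n grid graph has exactly two facets, namely the two alternating (checkerboard) transversals {a_1, b_2, a_3, ...} and {b_1, a_2, b_3, ...}, and these facets are disjoint; hence Δₙᵗ(G_{2×n}) is homotopy equivalent to S⁰. -/
open Finset

attribute [local instance] Classical.propDecidable

variable {V : Type*}

/-!
An independent set of size `n` in the `2 × n` grid meets every column exactly once, and its
vertices in consecutive columns lie in different rows, so it is one of the two colour classes
of the checkerboard colouring. Hence the total `n`-cut complex consists of the subsets of
either class: it is the disjoint union of two full simplices. The signed mass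
`∑_A f - ∑_B f` maps its realization onto `{±1} = S⁰`; sending `±1` back to a vertex of the
corresponding simplex is a homotopy inverse, by the straight-line homotopy inside each simplex.
-/

def checkerboard (m n p : ℕ) : Finset (Fin m × Fin n) :=
  univ.filter fun v => (v.1.1 + v.2.1) % 2 = p

section Checkerboard

variable {m n : ℕ}

lemma mem_checkerboard {p : ℕ} {v : Fin m × Fin n} :
    v ∈ checkerboard m n p ↔ (v.1.1 + v.2.1) % 2 = p := by
  simp [checkerboard]

lemma disjoint_checkerboard_zero_iff {s : Finset (Fin m × Fin n)} :
    Disjoint (checkerboard m n 0) s ↔ s ⊆ checkerboard m n 1 := by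
  simp only [disjoint_right, subset_iff, mem_checkerboard, Nat.mod_two_ne_zero]

lemma disjoint_checkerboard_one_iff {s : Finset (Fin m × Fin n)} :
    Disjoint (checkerboard m n 1) s ↔ s ⊆ checkerboard m n 0 := by
  simp only [disjoint_right, subset_iff, mem_checkerboard, Nat.mod_two_ne_one]

lemma gridGraph_adj_parity_ne {u v : Fin m × Fin n} (h : (gridGraph m n).Adj u v) :
    (u.1.1 + u.2.1) % 2 ≠ (v.1.1 + v.2.1) % 2 := by
  rcases h with ⟨h1, h2⟩ | ⟨h1, h2⟩ <;> have := congrArg Fin.val h1 <;> omega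

lemma isIndep_checkerboard (p : ℕ) : IsIndep (gridGraph m n) (checkerboard m n p) :=
  fun _ hu _ hv huv =>
    gridGraph_adj_parity_ne huv ((mem_checkerboard.1 hu).trans (mem_checkerboard.1 hv).symm)

lemma card_checkerboard_two {p : ℕ} (hp : p < 2) : #(checkerboard 2 n p) = n := by
  refine (card_nbij' Prod.snd (fun j => (⟨(p + j) % 2, Nat.mod_lt _ two_pos⟩, j))
    (fun _ _ => mem_coe.2 (mem_univ _)) (fun j _ => ?_) (fun v hv => ?_)
    (fun _ _ => rfl)).trans (card_fin n)
  · simp only [mem_coe, mem_checkerboard]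
    omega
  · have hv := mem_checkerboard.1 hv
    have := v.1.2
    ext <;> simp only
    omega

lemma checkerboard_two_nonempty (hn : 0 < n) {p : ℕ} (hp : p < 2) :
    (checkerboard 2 n p).Nonempty :=
  card_pos.1 (by rwa [card_checkerboard_two hp])

end Checkerboard

namespace IsIndep

variable {n : ℕ} {S : Finset (Fin 2 × Fin n)}

lemma injOn_snd (hS : IsIndep (gridGraph 2 n) S) :
    Set.InjOn Prod.snd (S : Set (Fin 2 × Fin n)) := by
  intro u hu v hv huv
  by_contra hne
  refine hS u hu v hv (Or.inr ⟨huv, ?_⟩)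
  have h1 : u.1.1 ≠ v.1.1 := fun h => hne (Prod.ext (Fin.ext h) huv)
  have := u.1.2; have := v.1.2
  omega

lemma parity_eq_of_col_succ {u w : Fin 2 × Fin n} (hS : IsIndep (gridGraph 2 n) S) (hu : u ∈ S)
    (hw : w ∈ S) (huw : w.2.1 = u.2.1 + 1) : (u.1.1 + u.2.1) % 2 = (w.1.1 + w.2.1) % 2 := by
  have hrow : u.1.1 ≠ w.1.1 := fun h => hS u hu w hw (Or.inl ⟨Fin.ext h, Or.inl huw.symm⟩)
  have := u.1.2; have := w.1.2
  omega

lemma parity_eq (hS : IsIndep (gridGraph 2 n) S) (hcol : ∀ j : Fin n, ∃ v ∈ S, v.2 = j)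
    {u w : Fin 2 × Fin n} (hu : u ∈ S) (hw : w ∈ S) :
    (u.1.1 + u.2.1) % 2 = (w.1.1 + w.2.1) % 2 := by
  suffices h : ∀ k, ∀ u ∈ S, ∀ w ∈ S, w.2.1 = u.2.1 + k →
      (u.1.1 + u.2.1) % 2 = (w.1.1 + w.2.1) % 2 by
    rcases le_total u.2.1 w.2.1 with h' | h'
    · exact h (w.2.1 - u.2.1) u hu w hw (by omega)
    · exact (h (u.2.1 - w.2.1) w hw u hu (by omega)).symm
  intro k
  induction k with
  | zero =>
    intro u hu w hw huw
    rw [injOn_snd hS hu hw (Fin.ext (by omega))]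
  | succ k ih =>
    intro u hu w hw huw
    have := w.2.2
    obtain ⟨x, hx, hxcol⟩ := hcol ⟨u.2.1 + k, by omega⟩
    have hxk : x.2.1 = u.2.1 + k := by rw [hxcol]
    exact (ih u hu x hx hxk).trans (parity_eq_of_col_succ hS hx hw (by omega))

lemma eq_checkerboard (hS : IsIndep (gridGraph 2 n) S) (hcard : #S = n) :
    S = checkerboard 2 n 0 ∨ S = checkerboard 2 n 1 := by
  have hcol : ∀ j : Fin n, ∃ v ∈ S, v.2 = j := by
    have himage : S.image Prod.snd = univ := by
      apply eq_univ_of_card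
      rw [card_image_of_injOn (injOn_snd hS), hcard, Fintype.card_fin]
    intro j
    exact mem_image.1 (himage ▸ mem_univ j)
  have heq {p : ℕ} (hp : p < 2) (hsub : S ⊆ checkerboard 2 n p) : S = checkerboard 2 n p :=
    eq_of_subset_of_card_le hsub (by rw [card_checkerboard_two hp, hcard])
  rcases S.eq_empty_or_nonempty with rfl | ⟨u, hu⟩
  · exact Or.inl (heq two_pos (empty_subset _))
  have hsub : S ⊆ checkerboard 2 n ((u.1.1 + u.2.1) % 2) :=
    fun w hw => mem_checkerboard.2 (parity_eq hS hcol hw hu)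
  rcases Nat.mod_two_eq_zero_or_one (u.1.1 + u.2.1) with h | h <;> rw [h] at hsub
  · exact Or.inl (heq two_pos hsub)
  · exact Or.inr (heq one_lt_two hsub)

end IsIndep

def pairOfSimplices (A B : Finset V) : Set (Finset V) := {σ | σ ⊆ A ∨ σ ⊆ B}

lemma totalCutComplex_gridGraph_two (n : ℕ) :
    totalCutComplex (gridGraph 2 n) n =
      pairOfSimplices (checkerboard 2 n 0) (checkerboard 2 n 1) := by
  ext σ
  simp only [totalCutComplex, pairOfSimplices, Set.mem_ofPred_eq,
    subset_compl_iff_disjoint_right]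
  constructor
  · rintro ⟨S, hSσ, hcard, hS⟩
    rcases hS.eq_checkerboard hcard with rfl | rfl
    · exact Or.inr (disjoint_checkerboard_zero_iff.1 hSσ)
    · exact Or.inl (disjoint_checkerboard_one_iff.1 hSσ)
  · rintro (hσ | hσ)
    · exact ⟨_, disjoint_checkerboard_one_iff.2 hσ, card_checkerboard_two one_lt_two,
        isIndep_checkerboard 1⟩
    · exact ⟨_, disjoint_checkerboard_zero_iff.2 hσ, card_checkerboard_two two_pos,
        isIndep_checkerboard 0⟩

lemma setOf_isFacet_pairOfSimplices {A B : Finset V} (hAB : ¬A ⊆ B) (hBA : ¬B ⊆ A) :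
    {σ | IsFacet (pairOfSimplices A B) σ} = {A, B} := by
  ext σ
  simp only [IsFacet, pairOfSimplices, Set.mem_ofPred_eq, Set.mem_insert_iff,
    Set.mem_singleton_iff]
  constructor
  · rintro ⟨hσ | hσ, hmax⟩
    · exact Or.inl (hmax A (Or.inl subset_rfl) hσ)
    · exact Or.inr (hmax B (Or.inr subset_rfl) hσ)
  · rintro (rfl | rfl)
    · refine ⟨Or.inl subset_rfl, fun τ hτ hστ => ?_⟩
      rcases hτ with hτ | hτ
      · exact subset_antisymm hστ hτ
      · exact absurd (hστ.trans hτ) hAB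
    · refine ⟨Or.inr subset_rfl, fun τ hτ hστ => ?_⟩
      rcases hτ with hτ | hτ
      · exact absurd (hστ.trans hτ) hBA
      · exact subset_antisymm hστ hτ

theorem ContinuousMap.homotopic_of_segment_subset {X E : Type*} [TopologicalSpace X]
    [AddCommGroup E] [TopologicalSpace E] [IsTopologicalAddGroup E] [Module ℝ E]
    [ContinuousSMul ℝ E] {s : Set E} {f g : C(X, s)}
    (h : ∀ x, segment ℝ (f x : E) (g x) ⊆ s) : f.Homotopic g := by
  let incl : C(s, E) := ⟨Subtype.val, continuous_subtype_val⟩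
  let F := ContinuousMap.Homotopy.affine (incl.comp f) (incl.comp g)
  exact ⟨{
    toFun := fun p => ⟨F p, h p.2 (lineMap_mem_segment ℝ _ _ p.1.2)⟩
    continuous_toFun := F.continuous.subtype_mk _
    map_zero_left := fun x => Subtype.ext (F.apply_zero x)
    map_one_left := fun x => Subtype.ext (F.apply_one x) }⟩

section Realization

variable [Fintype V]

def simplexOn (σ : Finset V) : Set (V → ℝ) :=
  {f | (∀ v, 0 ≤ f v) ∧ ∑ v, f v = 1 ∧ ∀ v, f v ≠ 0 → v ∈ σ}

lemma convex_simplexOn (σ : Finset V) : Convex ℝ (simplexOn σ) := by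
  rintro f ⟨hf0, hf1, hfσ⟩ g ⟨hg0, hg1, hgσ⟩ a b ha hb hab
  refine ⟨fun v => ?_, ?_, fun v hv => ?_⟩
  · simp only [Pi.add_apply, Pi.smul_apply, smul_eq_mul]
    have := hf0 v; have := hg0 v
    positivity
  · simp only [Pi.add_apply, Pi.smul_apply, smul_eq_mul, sum_add_distrib, ← mul_sum, hf1, hg1]
    linarith
  · by_contra hvσ
    have hfv : f v = 0 := by_contra fun h => hvσ (hfσ v h)
    have hgv : g v = 0 := by_contra fun h => hvσ (hgσ v h)
    simp [hfv, hgv] at hv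

lemma pi_single_mem_simplexOn {σ : Finset V} {a : V} (ha : a ∈ σ) :
    Pi.single a 1 ∈ simplexOn σ := by
  refine ⟨fun v => ?_, by simp, fun v hv => ?_⟩
  · rcases eq_or_ne v a with rfl | h <;> simp [*]
  · rcases eq_or_ne v a with rfl | h <;> simp_all

lemma sum_eq_one_of_mem_simplexOn {σ s : Finset V} {f : V → ℝ} (hf : f ∈ simplexOn σ)
    (hσs : σ ⊆ s) : ∑ v ∈ s, f v = 1 := by
  rw [← hf.2.1]
  exact sum_subset (subset_univ s) fun v _ hvs => by_contra fun hv => hvs (hσs (hf.2.2 v hv))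

lemma sum_eq_zero_of_mem_simplexOn {σ s : Finset V} {f : V → ℝ} (hf : f ∈ simplexOn σ)
    (hσs : Disjoint σ s) : ∑ v ∈ s, f v = 0 :=
  sum_eq_zero fun v hvs => by_contra fun hv => disjoint_left.1 hσs (hf.2.2 v hv) hvs

lemma geomReal_pairOfSimplices (A B : Finset V) :
    geomReal (pairOfSimplices A B) = simplexOn A ∪ simplexOn B := by
  ext f
  constructor
  · rintro ⟨hf0, hf1, σ, hσ | hσ, hfσ⟩
    · exact Or.inl ⟨hf0, hf1, fun v hv => hσ (hfσ v hv)⟩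
    · exact Or.inr ⟨hf0, hf1, fun v hv => hσ (hfσ v hv)⟩
  · rintro (⟨hf0, hf1, hfA⟩ | ⟨hf0, hf1, hfB⟩)
    · exact ⟨hf0, hf1, A, Or.inl subset_rfl, hfA⟩
    · exact ⟨hf0, hf1, B, Or.inr subset_rfl, hfB⟩

end Realization

lemma mem_nSphere_zero_iff {x : EuclideanSpace ℝ (Fin 1)} : x ∈ nSphere 0 ↔ |x 0| = 1 := by
  rw [nSphere, mem_sphere_zero_iff_norm, EuclideanSpace.norm_eq, Fin.sum_univ_one,
    Real.norm_eq_abs, sq_abs, Real.sqrt_sq_eq_abs]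

section PairOfSimplices

variable {A B : Finset V}

def signedMass (A B : Finset V) (f : V → ℝ) : ℝ := ∑ v ∈ A, f v - ∑ v ∈ B, f v

/-- The affine path from the vertex `b` (at `c = -1`) to the vertex `a` (at `c = 1`). -/
noncomputable def segmentPoint (a b : V) (c : ℝ) : V → ℝ :=
  Pi.single a ((1 + c) / 2) + Pi.single b ((1 - c) / 2)

lemma segmentPoint_one (a b : V) : segmentPoint a b 1 = Pi.single a 1 := by
  simp [segmentPoint]

lemma segmentPoint_neg_one (a b : V) : segmentPoint a b (-1) = Pi.single b 1 := by
  simp [segmentPoint]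

lemma signedMass_segmentPoint (hAB : Disjoint A B) {a b : V} (ha : a ∈ A) (hb : b ∈ B)
    (c : ℝ) : signedMass A B (segmentPoint a b c) = c := by
  simp only [signedMass, segmentPoint, Pi.add_apply, sum_add_distrib, sum_pi_single', ha, hb,
    disjoint_left.1 hAB ha, disjoint_right.1 hAB hb, if_true, if_false]
  ring

variable [Fintype V]

lemma signedMass_of_mem_simplexOn_left (hAB : Disjoint A B) {f : V → ℝ}
    (hf : f ∈ simplexOn A) : signedMass A B f = 1 := by
  rw [signedMass, sum_eq_one_of_mem_simplexOn hf subset_rfl, sum_eq_zero_of_mem_simplexOn hf hAB,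
    sub_zero]

lemma signedMass_of_mem_simplexOn_right (hAB : Disjoint A B) {f : V → ℝ}
    (hf : f ∈ simplexOn B) : signedMass A B f = -1 := by
  rw [signedMass, sum_eq_one_of_mem_simplexOn hf subset_rfl,
    sum_eq_zero_of_mem_simplexOn hf hAB.symm, zero_sub]

noncomputable def toSphere (hAB : Disjoint A B) :
    C(geomReal (pairOfSimplices A B), nSphere 0) where
  toFun f := ⟨WithLp.toLp 2 fun _ => signedMass A B f, mem_nSphere_zero_iff.2 <| by
    have hf : f.1 ∈ simplexOn A ∪ simplexOn B := geomReal_pairOfSimplices A B ▸ f.2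
    rcases hf with hf | hf
    · simp [signedMass_of_mem_simplexOn_left hAB hf]
    · simp [signedMass_of_mem_simplexOn_right hAB hf]⟩
  continuous_toFun := by
    unfold signedMass
    fun_prop

noncomputable def fromSphere {a b : V} (ha : a ∈ A) (hb : b ∈ B) :
    C(nSphere 0, geomReal (pairOfSimplices A B)) where
  toFun x := ⟨segmentPoint a b (x.1 0), geomReal_pairOfSimplices A B ▸ by
    rcases abs_eq_abs.1 ((mem_nSphere_zero_iff.1 x.2).trans abs_one.symm) with h | h
    · exact Or.inl (h ▸ segmentPoint_one a b ▸ pi_single_mem_simplexOn ha)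
    · exact Or.inr (h ▸ segmentPoint_neg_one a b ▸ pi_single_mem_simplexOn hb)⟩
  continuous_toFun := by
    have hc : Continuous fun x : nSphere 0 => x.1 0 := by fun_prop
    exact (((continuous_single a).comp ((hc.const_add 1).div_const 2)).add
      ((continuous_single b).comp ((continuous_const.sub hc).div_const 2))).subtype_mk _

theorem nonempty_homotopyEquiv_geomReal_pairOfSimplices (hAB : Disjoint A B)
    (hA : A.Nonempty) (hB : B.Nonempty) :
    Nonempty (ContinuousMap.HomotopyEquiv (geomReal (pairOfSimplices A B)) (nSphere 0)) := by
  obtain ⟨a, ha⟩ := hA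
  obtain ⟨b, hb⟩ := hB
  refine ⟨⟨toSphere hAB, fromSphere ha hb, ?_, ?_⟩⟩
  · refine ContinuousMap.homotopic_of_segment_subset fun f => ?_
    have hf : f.1 ∈ simplexOn A ∪ simplexOn B := geomReal_pairOfSimplices A B ▸ f.2
    show segment ℝ (segmentPoint a b (signedMass A B f)) f ⊆ _
    refine Set.Subset.trans ?_ (geomReal_pairOfSimplices A B).superset
    rcases hf with hf | hf
    · rw [signedMass_of_mem_simplexOn_left hAB hf, segmentPoint_one]
      exact ((convex_simplexOn A).segment_subset (pi_single_mem_simplexOn ha) hf).trans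
        Set.subset_union_left
    · rw [signedMass_of_mem_simplexOn_right hAB hf, segmentPoint_neg_one]
      exact ((convex_simplexOn B).segment_subset (pi_single_mem_simplexOn hb) hf).trans
        Set.subset_union_right
  · convert ContinuousMap.Homotopic.refl _
    ext x i
    rw [Fin.fin_one_eq_zero i]
    exact (signedMass_segmentPoint hAB ha hb _).symm

end PairOfSimplices

-- Row `0` of `Fin 2 × Fin n` is the paper's row `a`, row `1` is `b`; columns are `0`-indexed.
/-- For `n = k ≥ 2`, the total `n`-cut complex of the `2 × n` grid graph has
exactly two facets, the two alternating (checkerboard) transversals, which are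
disjoint; hence the complex is homotopy equivalent to `S⁰`.
(Rows: `0 = a`, `1 = b`; columns are `0`-indexed.) -/
theorem totalCutComplex_grid_two_top (n : ℕ) (hn : 2 ≤ n) :
    {σ : Finset (Fin 2 × Fin n) | IsFacet (totalCutComplex (gridGraph 2 n) n) σ} =
      {Finset.univ.filter (fun v : Fin 2 × Fin n => (v.1.1 + v.2.1) % 2 = 0),
       Finset.univ.filter (fun v : Fin 2 × Fin n => (v.1.1 + v.2.1) % 2 = 1)} ∧
    Disjoint (Finset.univ.filter (fun v : Fin 2 × Fin n => (v.1.1 + v.2.1) % 2 = 0))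
      (Finset.univ.filter (fun v : Fin 2 × Fin n => (v.1.1 + v.2.1) % 2 = 1)) ∧
    Nonempty (ContinuousMap.HomotopyEquiv
      ↥(geomReal (totalCutComplex (gridGraph 2 n) n)) ↥(nSphere 0)) := by
  have hdisj : Disjoint (checkerboard 2 n 0) (checkerboard 2 n 1) :=
    disjoint_checkerboard_zero_iff.2 subset_rfl
  have hne₀ := checkerboard_two_nonempty (by omega : 0 < n) two_pos
  have hne₁ := checkerboard_two_nonempty (by omega : 0 < n) one_lt_two
  rw [totalCutComplex_gridGraph_two]
  exact ⟨setOf_isFacet_pairOfSimplices (fun h => hne₀.ne_empty (hdisj.eq_bot_of_le h))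
      (fun h => hne₁.ne_empty (hdisj.symm.eq_bot_of_le h)),
    hdisj, nonempty_homotopyEquiv_geomReal_pairOfSimplices hdisj hne₀ hne₁⟩
end

section
/- For the 2×(n+1) grid graph and 3 ≤ k ≤ 2n, the vertex b_{n+1} is a shedding vertex of Δₖ(G_{2×(n+1)}): every facet of the deletion del_{Δₖ(G_{2×(n+1)})}(b_{n+1}) is a facet of Δₖ(G_{2×(n+1)}). -/
open Finset

attribute [local instance] Classical.propDecidable

variable {V : Type*}

section AuxSheddingProof

variable {W : Type*}

/-- Reachability within a vertex set, phrased on the ambient type. -/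
def RelA (G : SimpleGraph W) (s : Set W) : W → W → Prop :=
  Relation.ReflTransGen (fun p q => p ∈ s ∧ q ∈ s ∧ G.Adj p q)

lemma relA_symm {G : SimpleGraph W} {s : Set W} {x y : W} (h : RelA G s x y) : RelA G s y x :=
  letI : Std.Symm (fun p q => p ∈ s ∧ q ∈ s ∧ G.Adj p q) := ⟨fun _ _ h => ⟨h.2.1, h.1, h.2.2.symm⟩⟩
  (Relation.ReflTransGen.symmetric (r := fun p q => p ∈ s ∧ q ∈ s ∧ G.Adj p q)).symm _ _ h

lemma relA_mono {G : SimpleGraph W} {s t : Set W} (hst : s ⊆ t) {x y : W}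
    (h : RelA G s x y) : RelA G t x y :=
  Relation.ReflTransGen.mono (r := fun p q => p ∈ s ∧ q ∈ s ∧ G.Adj p q)
    (p := fun p q => p ∈ t ∧ q ∈ t ∧ G.Adj p q) (fun p q h => ⟨hst h.1, hst h.2.1, h.2.2⟩) x y h

lemma reachable_iff_relA {G : SimpleGraph W} {s : Set W} (x y : ↥s) :
    (G.induce s).Reachable x y ↔ RelA G s ↑x ↑y := by
  constructor
  · rintro ⟨w⟩
    induction w with
    | nil => exact Relation.ReflTransGen.refl
    | @cons u m _ h p ih =>
      exact Relation.ReflTransGen.head ⟨u.2, m.2, h⟩ ih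
  · intro h
    have main : ∀ c : W, RelA G s (↑x) c → ∀ hc : c ∈ s,
        (G.induce s).Reachable x ⟨c, hc⟩ := by
      intro c h
      induction h with
      | refl => intro hc; exact SimpleGraph.Reachable.refl _
      | tail _ hbc ih =>
        intro hc
        exact (ih hbc.1).trans (SimpleGraph.Adj.reachable (by exact hbc.2.2))
    exact main ↑y h y.2

lemma conn_relA {G : SimpleGraph W} {s : Set W} (h : (G.induce s).Connected)
    {x y : W} (hx : x ∈ s) (hy : y ∈ s) : RelA G s x y :=
  (reachable_iff_relA ⟨x, hx⟩ ⟨y, hy⟩).1 (h.preconnected _ _)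

lemma disconn_witness {G : SimpleGraph W} {s : Set W} (hne : s.Nonempty)
    (h : ¬ (G.induce s).Connected) : ∃ x ∈ s, ∃ y ∈ s, ¬ RelA G s x y := by
  have hp : ¬ (G.induce s).Preconnected := by
    intro hp
    haveI := hne.to_subtype
    exact h ⟨hp⟩
  simp only [SimpleGraph.Preconnected, not_forall] at hp
  obtain ⟨u, v, huv⟩ := hp
  exact ⟨u, u.2, v, v.2, fun hr => huv ((reachable_iff_relA u v).2 hr)⟩

lemma bypassA {G : SimpleGraph W} {T : Set W} {v a b : W}
    (hnb : ∀ z ∈ T, G.Adj v z → z = a ∨ z = b)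
    (hab : a ∈ T → a ≠ v → b ∈ T → b ≠ v → RelA G (T \ {v}) a b)
    {x y : W} (hxv : x ≠ v) (hyv : y ≠ v) (h : RelA G T x y) :
    RelA G (T \ {v}) x y := by
  refine (Relation.ReflTransGen.head_induction_on
    (motive := fun z (_ : Relation.ReflTransGen (fun p q => p ∈ T ∧ q ∈ T ∧ G.Adj p q) z y) =>
      (z ≠ v → RelA G (T \ {v}) z y) ∧
      (z = v → ∀ w, (w = a ∨ w = b) → w ∈ T → w ≠ v → RelA G (T \ {v}) w y))
    h ⟨fun _ => Relation.ReflTransGen.refl, fun hyv' => absurd hyv' hyv⟩ ?_).1 hxv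
  intro p q step hq ih
  constructor
  · intro hpv
    by_cases hqv : q = v
    · exact ih.2 hqv p (hnb p step.1 (hqv ▸ step.2.2.symm)) step.1 hpv
    · exact Relation.ReflTransGen.head ⟨⟨step.1, hpv⟩, ⟨step.2.1, hqv⟩, step.2.2⟩ (ih.1 hqv)
  · intro hpv w hw hwT hwv
    have hadj : G.Adj v q := hpv ▸ step.2.2
    have hqv : q ≠ v := hadj.ne'
    have hq_ab : q = a ∨ q = b := hnb q step.2.1 hadj
    have h1 : RelA G (T \ {v}) q y := ih.1 hqv
    by_cases hwq : w = q
    · exact hwq ▸ h1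
    · have hcross : RelA G (T \ {v}) w q := by
        rcases hw with rfl | rfl <;> rcases hq_ab with rfl | rfl
        · exact absurd rfl hwq
        · exact hab hwT hwv step.2.1 hqv
        · exact relA_symm (hab step.2.1 hqv hwT hwv)
        · exact absurd rfl hwq
      exact hcross.trans h1

lemma reach_nbrA {G : SimpleGraph W} {T : Set W} {v a b : W}
    (hnb : ∀ z ∈ T, G.Adj v z → z = a ∨ z = b)
    {x : W} (hxv : x ≠ v) (h : RelA G T x v) :
    (a ∈ T ∧ a ≠ v ∧ RelA G (T \ {v}) x a) ∨ (b ∈ T ∧ b ≠ v ∧ RelA G (T \ {v}) x b) := by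
  refine Relation.ReflTransGen.head_induction_on
    (motive := fun z (_ : Relation.ReflTransGen (fun p q => p ∈ T ∧ q ∈ T ∧ G.Adj p q) z v) =>
      z ≠ v →
      (a ∈ T ∧ a ≠ v ∧ RelA G (T \ {v}) z a) ∨ (b ∈ T ∧ b ≠ v ∧ RelA G (T \ {v}) z b))
    h (fun hvv => absurd rfl hvv) ?_ hxv
  intro p q step hq ih hpv
  by_cases hqv : q = v
  · have hadj : G.Adj v p := hqv ▸ step.2.2.symm
    rcases hnb p step.1 hadj with rfl | rfl
    · exact Or.inl ⟨step.1, hpv, Relation.ReflTransGen.refl⟩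
    · exact Or.inr ⟨step.1, hpv, Relation.ReflTransGen.refl⟩
  · have hstep : p ∈ T \ {v} ∧ q ∈ T \ {v} ∧ G.Adj p q :=
      ⟨⟨step.1, hpv⟩, ⟨step.2.1, hqv⟩, step.2.2⟩
    rcases ih hqv with ⟨h1, h2, h3⟩ | ⟨h1, h2, h3⟩
    · exact Or.inl ⟨h1, h2, Relation.ReflTransGen.head hstep h3⟩
    · exact Or.inr ⟨h1, h2, Relation.ReflTransGen.head hstep h3⟩

variable [DecidableEq W]

lemma endgameA (G : SimpleGraph W) (S : Finset W) (v a b : W)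
    (hnb : ∀ z, G.Adj v z → z = a ∨ z = b)
    (hvS : v ∉ S)
    (hnab : ¬ RelA G ↑S a b)
    {c : W} (hcS : c ∈ S) (hca : c ≠ a) (hr : RelA G ↑S c a) :
    ¬ (G.induce ((insert v (S.erase a) : Finset W) : Set W)).Connected := by
  intro hconn
  have hsub : ((insert v (S.erase a) : Finset W) : Set W) \ {v} = (↑S : Set W) \ {a} := by
    rw [Finset.coe_insert, Finset.coe_erase,
      Set.insert_diff_self_of_notMem (fun h => hvS (Finset.mem_coe.1 h.1))]
  have hcv : c ≠ v := fun h => hvS (h ▸ hcS)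
  have hcmem : c ∈ ((insert v (S.erase a) : Finset W) : Set W) := by
    simp only [Finset.coe_insert, Set.mem_insert_iff, Finset.mem_coe, Finset.mem_erase]
    exact Or.inr ⟨hca, hcS⟩
  have hvmem : v ∈ ((insert v (S.erase a) : Finset W) : Set W) := by
    simp
  have hrel : RelA G ((insert v (S.erase a) : Finset W) : Set W) c v :=
    conn_relA hconn hcmem hvmem
  have hnb' : ∀ z ∈ ((insert v (S.erase a) : Finset W) : Set W), G.Adj v z → z = b ∨ z = b := by
    intro z hz hadj
    rcases hnb z hadj with rfl | rfl
    · exfalso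
      simp only [Finset.coe_insert, Set.mem_insert_iff, Finset.mem_coe, Finset.mem_erase] at hz
      rcases hz with hz | hz
      · exact hadj.ne' hz
      · exact hz.1 rfl
    · exact Or.inl rfl
  have hfin : RelA G (↑S : Set W) c b := by
    rcases reach_nbrA hnb' hcv hrel with ⟨_, _, hr'⟩ | ⟨_, _, hr'⟩ <;>
    · rw [hsub] at hr'
      exact relA_mono Set.diff_subset hr'
  exact hnab ((relA_symm hr).trans hfin)

lemma keyLemmaA (G : SimpleGraph W) (v a b : W)
    (hnb : ∀ z, G.Adj v z → z = a ∨ z = b)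
    (hav : a ≠ v) (hbv : b ≠ v)
    (S : Finset W) (hcard : 3 ≤ S.card) (hvS : v ∉ S)
    (hdis : ¬ (G.induce (S : Set W)).Connected) :
    ∃ u ∈ S, ¬ (G.induce ((insert v (S.erase u) : Finset W) : Set W)).Connected := by
  classical
  set T : Finset W := insert v S with hT
  have hTS : (↑T : Set W) \ {v} = (↑S : Set W) := by
    rw [hT, Finset.coe_insert, Set.insert_diff_self_of_notMem (by simpa using hvS)]
  have hnbT : ∀ z ∈ (↑T : Set W), G.Adj v z → z = a ∨ z = b := fun z _ h => hnb z h
  by_cases hconn : (G.induce (T : Set W)).Connected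
  · -- S ∪ {v} connected
    have hSne : (↑S : Set W).Nonempty := by
      have : S.Nonempty := Finset.card_pos.1 (by omega)
      exact_mod_cast this
    obtain ⟨x, hxS, y, hyS, hxy⟩ := disconn_witness hSne hdis
    have hxv : x ≠ v := fun h => hvS (h ▸ hxS)
    have hyv : y ≠ v := fun h => hvS (h ▸ hyS)
    have hxT : x ∈ (↑T : Set W) := by rw [hT]; simp; exact Or.inr hxS
    have hyT : y ∈ (↑T : Set W) := by rw [hT]; simp; exact Or.inr hyS
    have hrT : RelA G (↑T : Set W) x y := conn_relA hconn hxT hyT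
    have haS : a ∈ S := by
      by_contra haS
      apply hxy
      have hab' : a ∈ (↑T : Set W) → a ≠ v → b ∈ (↑T : Set W) → b ≠ v →
          RelA G ((↑T : Set W) \ {v}) a b := by
        intro haT hav' _ _
        exfalso
        rw [hT] at haT
        simp only [Finset.coe_insert, Set.mem_insert_iff, Finset.mem_coe] at haT
        rcases haT with h | h
        · exact hav' h
        · exact haS h
      have := bypassA hnbT hab' hxv hyv hrT
      rwa [hTS] at this
    have hbS : b ∈ S := by
      by_contra hbS
      apply hxy
      have hab' : a ∈ (↑T : Set W) → a ≠ v → b ∈ (↑T : Set W) → b ≠ v →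
          RelA G ((↑T : Set W) \ {v}) a b := by
        intro _ _ hbT hbv'
        exfalso
        rw [hT] at hbT
        simp only [Finset.coe_insert, Set.mem_insert_iff, Finset.mem_coe] at hbT
        rcases hbT with h | h
        · exact hbv' h
        · exact hbS h
      have := bypassA hnbT hab' hxv hyv hrT
      rwa [hTS] at this
    have hnab : ¬ RelA G (↑S : Set W) a b := by
      intro hr
      apply hxy
      have := bypassA hnbT (fun _ _ _ _ => by rwa [hTS]) hxv hyv hrT
      rwa [hTS] at this
    -- pick c distinct from a and b
    have hcne : (S \ {a, b}).Nonempty := by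
      rw [← Finset.card_pos]
      have h1 : S.card ≤ (S \ {a, b}).card + ({a, b} : Finset W).card :=
        Finset.card_le_card_sdiff_add_card
      have h2 : ({a, b} : Finset W).card ≤ 2 :=
        (Finset.card_insert_le _ _).trans (by simp)
      omega
    obtain ⟨c, hc⟩ := hcne
    rw [Finset.mem_sdiff] at hc
    obtain ⟨hcS, hcab⟩ := hc
    have hca : c ≠ a := fun h => hcab (by simp [h])
    have hcb : c ≠ b := fun h => hcab (by simp [h])
    have hcv : c ≠ v := fun h => hvS (h ▸ hcS)
    have hcT : c ∈ (↑T : Set W) := by rw [hT]; simp; exact Or.inr hcS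
    have hvT : v ∈ (↑T : Set W) := by rw [hT]; simp
    have hrel : RelA G (↑T : Set W) c v := conn_relA hconn hcT hvT
    rcases reach_nbrA hnbT hcv hrel with ⟨_, _, hr⟩ | ⟨_, _, hr⟩
    · rw [hTS] at hr
      exact ⟨a, haS, endgameA G S v a b hnb hvS hnab hcS hca hr⟩
    · rw [hTS] at hr
      refine ⟨b, hbS, endgameA G S v b a (fun z h => (hnb z h).symm) hvS
        (fun h => hnab (relA_symm h)) hcS hcb hr⟩
  · -- S ∪ {v} disconnected
    have hTne : (↑T : Set W).Nonempty := ⟨v, by rw [hT]; simp⟩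
    obtain ⟨x, hxT, y, hyT, hxy⟩ := disconn_witness hTne hconn
    have hune : (S \ {x, y}).Nonempty := by
      rw [← Finset.card_pos]
      have h1 : S.card ≤ (S \ {x, y}).card + ({x, y} : Finset W).card :=
        Finset.card_le_card_sdiff_add_card
      have h2 : ({x, y} : Finset W).card ≤ 2 :=
        (Finset.card_insert_le _ _).trans (by simp)
      omega
    obtain ⟨u, hu⟩ := hune
    rw [Finset.mem_sdiff] at hu
    obtain ⟨huS, huxy⟩ := hu
    have hux : u ≠ x := fun h => huxy (by simp [h])
    have huy : u ≠ y := fun h => huxy (by simp [h])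
    have huv : u ≠ v := fun h => hvS (h ▸ huS)
    refine ⟨u, huS, ?_⟩
    intro hconn2
    have hset : ((insert v (S.erase u) : Finset W) : Set W) = (↑T : Set W) \ {u} := by
      rw [Finset.coe_insert, Finset.coe_erase, hT, Finset.coe_insert]
      exact Set.insert_diff_singleton_comm (Ne.symm huv) _
    apply hxy
    have hx' : x ∈ ((insert v (S.erase u) : Finset W) : Set W) := by
      rw [hset]; exact ⟨hxT, fun h => hux (Set.mem_singleton_iff.1 h).symm⟩
    have hy' : y ∈ ((insert v (S.erase u) : Finset W) : Set W) := by
      rw [hset]; exact ⟨hyT, fun h => huy (Set.mem_singleton_iff.1 h).symm⟩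
    have hr := conn_relA hconn2 hx' hy'
    rw [hset] at hr
    exact relA_mono Set.diff_subset hr

end AuxSheddingProof

/-- For the `2 × (n+1)` grid graph and `3 ≤ k ≤ 2n`, the vertex `b_{n+1}` is a
shedding vertex of the `k`-cut complex: every facet of the deletion of `b_{n+1}`
is a facet of the complex.  (Rows: `0 = a`, `1 = b`; columns `0`-indexed.) -/
theorem shedding_vertex_grid_two (n k : ℕ) (h3 : 3 ≤ k) (h2n : k ≤ 2 * n) :
    ∀ σ, IsFacet (delC (cutComplex (gridGraph 2 (n + 1)) k)
        ((1 : Fin 2), Fin.last n)) σ →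
      IsFacet (cutComplex (gridGraph 2 (n + 1)) k) σ := by
  letI : DecidableEq (Fin 2 × Fin (n + 1)) := fun a b => Classical.propDecidable _
  intro σ hfac
  obtain ⟨⟨hσK, hvσ⟩, hmax⟩ := hfac
  set G := gridGraph 2 (n + 1) with hG
  set v : Fin 2 × Fin (n + 1) := ((1 : Fin 2), Fin.last n) with hv
  have hn : 2 ≤ n := by omega
  have helper : ∀ S : Finset (Fin 2 × Fin (n + 1)), S ⊆ σᶜ → S.card = k →
      ¬ (G.induce (S : Set (Fin 2 × Fin (n + 1)))).Connected → v ∈ S →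
      IsFacet (cutComplex G k) σ := by
    intro S hSσ hScard hSdis hvS
    have hσsub : σ ⊆ Sᶜ := by
      intro z hz
      rw [Finset.mem_compl]
      intro hzS
      exact Finset.mem_compl.1 (hSσ hzS) hz
    have hKc : Sᶜ ∈ cutComplex G k := by
      refine ⟨S, ?_, hScard, hSdis⟩
      intro z hz
      exact Finset.mem_compl.2 (fun h => Finset.mem_compl.1 h hz)
    have hdel : Sᶜ ∈ delC (cutComplex G k) v :=
      ⟨hKc, fun h => Finset.mem_compl.1 h hvS⟩
    have hσeq : σ = Sᶜ := hmax _ hdel hσsub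
    refine ⟨hσeq ▸ hKc, ?_⟩
    intro τ hτ hsub
    obtain ⟨S', hS'τ, hS'card, -⟩ := hτ
    have hS'τ' : ∀ z ∈ S', z ∉ τ := fun z hz => Finset.mem_compl.1 (hS'τ hz)
    have hsub2 : ∀ z, z ∉ S → z ∈ τ := fun z hz => (hσeq ▸ hsub) (Finset.mem_compl.2 hz)
    have hS'S : S' = S := by
      apply Finset.eq_of_subset_of_card_le
      · intro z hz
        by_contra hzS
        exact hS'τ' z hz (hsub2 z hzS)
      · rw [hScard, hS'card]
    rw [hσeq]
    ext z
    rw [Finset.mem_compl]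
    constructor
    · intro hz
      exact hsub2 z hz
    · intro hz hzS
      exact hS'τ' z (hS'S ▸ hzS) hz
  obtain ⟨S, hSσ, hScard, hSdis⟩ := hσK
  by_cases hvS : v ∈ S
  · exact helper S hSσ hScard hSdis hvS
  · set a : Fin 2 × Fin (n + 1) := ((0 : Fin 2), Fin.last n) with ha
    set b : Fin 2 × Fin (n + 1) := ((1 : Fin 2), ⟨n - 1, by omega⟩) with hb
    have hnb : ∀ z, G.Adj v z → z = a ∨ z = b := by
      rintro ⟨z1, z2⟩ hadj
      rcases hadj with ⟨h1, h2⟩ | ⟨h1, h2⟩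
      · right
        have hz1 : z1 = 1 := h1.symm
        have hlt : z2.1 < n + 1 := z2.isLt
        have hval : (Fin.last n).1 = n := rfl
        rw [hb, Prod.ext_iff]
        refine ⟨hz1, ?_⟩
        apply Fin.ext
        show z2.1 = n - 1
        simp only [hv] at h2
        rw [hval] at h2
        omega
      · left
        have hz2 : z2 = Fin.last n := h1.symm
        rw [ha, Prod.ext_iff]
        refine ⟨?_, hz2⟩
        apply Fin.ext
        show z1.1 = 0
        have h1lt : z1.1 < 2 := z1.isLt
        simp only [hv] at h2
        have : (1 : Fin 2).1 = 1 := rfl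
        rw [this] at h2
        omega
    have hav : a ≠ v := by
      rw [ha, hv]
      intro h
      have := congrArg Prod.fst h
      simp at this
    have hbv : b ≠ v := by
      rw [hb, hv]
      intro h
      have := congrArg (fun p => (Prod.snd p).1) h
      simp [Fin.last] at this
      omega
    obtain ⟨u, huS, hdis'⟩ :=
      keyLemmaA G v a b hnb hav hbv S (by omega) hvS hSdis
    have huv : u ≠ v := fun h => hvS (h ▸ huS)
    have hvnmem : v ∉ S.erase u := fun h => hvS (Finset.mem_of_mem_erase h)
    have hS'card : (insert v (S.erase u)).card = k := by
      rw [Finset.card_insert_of_notMem hvnmem, Finset.card_erase_of_mem huS, hScard]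
      omega
    have hS'σ : insert v (S.erase u) ⊆ σᶜ := by
      intro z hz
      rcases Finset.mem_insert.1 hz with rfl | hz'
      · exact Finset.mem_compl.2 hvσ
      · exact hSσ (Finset.mem_of_mem_erase hz')
    exact helper _ hS'σ hS'card hdis' (Finset.mem_insert_self _ _)
end
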